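/- Assume p ≡ 3 (mod 4). Suppose λ ∈ K̄ has order 2, n is an odd natural number, and c ∈ N satisfy λ(z) = c·zⁿ for z ∈ R, λ(z) = c⁻¹·zⁿ for z ∈ N, and cⁿ = c. Let α be the permutation of ℤ/p ∪ {∞} obtained as the composite (translation by 1) ∘ (map z ↦ (−c⁻¹)·z) ∘ λ, i.e. α(z) = 1 − c⁻¹·λ(z) on ℤ/p ∪ {∞}. Then α ∈ G, α has order 3, and α⁻¹(z) = λ(c·(1 − z)) for all z. -/

import Mathlib

/-!
The stabilizer `G_∞` has order `p (p - 1) / 2`, so the translations form a normal Sylow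
`p`-subgroup of it; hence every element of `G_∞` is affine, `z ↦ b z + d`. Counting `G_{0,∞}`
shows that the multipliers `b` occurring in `G` form a subgroup of index at most `2` in
`(ℤ/p)ˣ`, so they include every square, in particular `-c⁻¹` (both `-1` and `c` are
non-squares). Thus `α ∈ G`. As `α` cycles `∞ ↦ 1 ↦ 0 ↦ ∞`, the element `α³ ∈ G` fixes `∞`, `0`
and `1`; being affine it is the identity.
-/

instance (X : Type*) [DecidableEq X] : DecidableEq (OnePoint X) :=
  inferInstanceAs (DecidableEq (Option X))

/-- The translation `z ↦ z + a` on `ℤ/p ∪ {∞}`, fixing `∞`. -/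
def ptrans (p : ℕ) (a : ZMod p) : Equiv.Perm (OnePoint (ZMod p)) :=
  Equiv.optionCongr (Equiv.addRight a)

/-- The map `z ↦ a z` on `ℤ/p ∪ {∞}`, fixing `∞`, for `a ≠ 0`. -/
def pmul (p : ℕ) [Fact p.Prime] (a : ZMod p) (ha : a ≠ 0) : Equiv.Perm (OnePoint (ZMod p)) :=
  Equiv.optionCongr (Equiv.mulLeft₀ a ha)

/-- Multiplication by `a` extended to `ℤ/p ∪ {∞}` (with `a·∞ = ∞`). -/
def opSmul (p : ℕ) (a : ZMod p) : OnePoint (ZMod p) → OnePoint (ZMod p) :=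
  fun x => Option.map (fun z => a * z) x

/-- Underlying function of the map `z ↦ -1/z`. -/
def negInvFun (p : ℕ) : OnePoint (ZMod p) → OnePoint (ZMod p)
  | Option.none => Option.some (0 : ZMod p)
  | Option.some z => if z = 0 then Option.none else Option.some (-z⁻¹ : ZMod p)

/-- The permutation `z ↦ -1/z` of `ℤ/p ∪ {∞}` (sending `0 ↦ ∞` and `∞ ↦ 0`). -/
def negInvPerm (p : ℕ) [Fact p.Prime] : Equiv.Perm (OnePoint (ZMod p)) :=
  Function.Involutive.toPerm (negInvFun p) (by
    intro x
    match x with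
    | Option.none => simp [negInvFun] <;> rfl
    | Option.some z =>
      by_cases hz : z = 0
      · simp [negInvFun, hz] <;> rfl
      · have h1 : (-z⁻¹ : ZMod p) ≠ 0 := by simp [hz]
        simp [negInvFun, hz, h1, inv_neg, inv_inv] <;> rfl)

/-- The involution `(0 ∞)(1 3)(2 6)(4 5)`. -/
def inv1 (p : ℕ) : Equiv.Perm (OnePoint (ZMod p)) :=
  Equiv.swap ((0 : ZMod p) : OnePoint (ZMod p)) OnePoint.infty *
  Equiv.swap ((1 : ZMod p) : OnePoint (ZMod p)) ((3 : ZMod p) : OnePoint (ZMod p)) *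
  Equiv.swap ((2 : ZMod p) : OnePoint (ZMod p)) ((6 : ZMod p) : OnePoint (ZMod p)) *
  Equiv.swap ((4 : ZMod p) : OnePoint (ZMod p)) ((5 : ZMod p) : OnePoint (ZMod p))

/-- The involution `(0 ∞)(1 5)(2 3)(4 6)`. -/
def inv2 (p : ℕ) : Equiv.Perm (OnePoint (ZMod p)) :=
  Equiv.swap ((0 : ZMod p) : OnePoint (ZMod p)) OnePoint.infty *
  Equiv.swap ((1 : ZMod p) : OnePoint (ZMod p)) ((5 : ZMod p) : OnePoint (ZMod p)) *
  Equiv.swap ((2 : ZMod p) : OnePoint (ZMod p)) ((3 : ZMod p) : OnePoint (ZMod p)) *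
  Equiv.swap ((4 : ZMod p) : OnePoint (ZMod p)) ((6 : ZMod p) : OnePoint (ZMod p))

/-- The set of nonzero squares in `ℤ/p`. -/
def Rset (p : ℕ) : Set (ZMod p) := {a | a ≠ 0 ∧ IsSquare a}

/-- The set of nonsquares in `(ℤ/p)*`. -/
def Nset (p : ℕ) : Set (ZMod p) := {a | a ≠ 0 ∧ ¬ IsSquare a}

open Equiv MulAction OnePoint

theorem Subgroup.card_inf_stabilizer_mul_ncard_orbit {M α : Type*} [Group M] [MulAction M α]
    (H : Subgroup M) (x : α) :
    Nat.card ↥(H ⊓ stabilizer M x) * (orbit H x).ncard = Nat.card H := by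
  rw [← index_stabilizer, ← Subgroup.card_mul_index (stabilizer H x)]
  congr 1
  exact (Nat.card_congr (Subgroup.subgroupOfEquivOfLe inf_le_left).toEquiv).symm.trans
    (congrArg (fun K : Subgroup H => Nat.card K) (Subgroup.inf_subgroupOf_left _ _))

theorem IsPGroup.normal_of_index_lt {G : Type*} [Group G] [Finite G] {p : ℕ} [Fact p.Prime]
    {H : Subgroup G} (hH : IsPGroup p H) (hindex : H.index < p) : H.Normal := by
  have hpos : 0 < H.index := Nat.pos_of_ne_zero H.index_ne_zero_of_finite
  set P := hH.toSylow (Nat.not_dvd_of_pos_of_lt hpos hindex)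
  -- the number of Sylow subgroups is `≡ 1 [MOD p]` and divides `H.index < p`
  have hcard : Nat.card (Sylow p G) = 1 := by
    have hlt : Nat.card (Sylow p G) < p :=
      (Nat.le_of_dvd hpos P.card_dvd_index).trans_lt hindex
    have hmod := card_sylow_modEq_one p G
    rwa [Nat.ModEq, Nat.mod_eq_of_lt hlt, Nat.mod_eq_of_lt (Fact.out : p.Prime).one_lt] at hmod
  have : Subsingleton (Sylow p G) := (Nat.card_eq_one_iff_unique.mp hcard).1
  exact P.normal_of_subsingleton

theorem Subgroup.sq_mem_of_card_le_two_mul {G : Type*} [Group G] [Finite G] (H : Subgroup G)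
    (h : Nat.card G ≤ 2 * Nat.card H) (g : G) : g ^ 2 ∈ H := by
  have hmul := H.card_mul_index
  have hpos : 0 < Nat.card H := Nat.card_pos
  have hle : H.index ≤ 2 := by nlinarith
  interval_cases hi : H.index
  · exact absurd hi H.index_ne_zero_of_finite
  · simp [Subgroup.index_eq_one.mp hi]
  · exact Subgroup.sq_mem_of_index_two hi g

theorem ZMod.isSquare_neg_inv_of_not_isSquare {p : ℕ} [Fact p.Prime] (hp : p % 4 = 3)
    {c : ZMod p} (hc : ¬ IsSquare c) : IsSquare (-c⁻¹) := by
  have hc0 : c ≠ 0 := fun h => hc (h ▸ IsSquare.zero)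
  have hneg : quadraticChar (ZMod p) (-1) = -1 :=
    quadraticChar_neg_one_iff_not_isSquare.mpr fun h => ZMod.exists_sq_eq_neg_one_iff.mp h hp
  have hnegc : IsSquare (-c) := by
    refine (quadraticChar_one_iff_isSquare (neg_ne_zero.mpr hc0)).mp ?_
    rw [neg_eq_neg_one_mul, map_mul, hneg, quadraticChar_neg_one_iff_not_isSquare.mpr hc]
    norm_num
  have : -c⁻¹ = -c * (c⁻¹ * c⁻¹) := by field_simp
  exact this ▸ hnegc.mul (IsSquare.mul_self _)

section Maps

variable {p : ℕ}

@[simp] theorem ptrans_coe (a z : ZMod p) : ptrans p a z = ↑(z + a) := rfl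

@[simp] theorem ptrans_infty (a : ZMod p) : ptrans p a ∞ = ∞ := rfl

def ptransHom (p : ℕ) : Multiplicative (ZMod p) →* Equiv.Perm (OnePoint (ZMod p)) where
  toFun a := ptrans p a.toAdd
  map_one' := by ext x; induction x using OnePoint.rec <;> simp
  map_mul' a b := by ext x; induction x using OnePoint.rec <;> simp [add_comm, add_left_comm]

theorem ptransHom_injective : Function.Injective (ptransHom p) := fun a b h => by
  simpa [ptransHom] using congr($h (0 : ZMod p))

variable [Fact p.Prime]

@[simp] theorem pmul_coe (a : ZMod p) (ha : a ≠ 0) (z : ZMod p) : pmul p a ha z = ↑(a * z) := rfl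

@[simp] theorem pmul_infty (a : ZMod p) (ha : a ≠ 0) : pmul p a ha ∞ = ∞ := rfl

def pmulHom (p : ℕ) [Fact p.Prime] : (ZMod p)ˣ →* Equiv.Perm (OnePoint (ZMod p)) where
  toFun u := pmul p u u.ne_zero
  map_one' := by ext x; induction x using OnePoint.rec <;> simp
  map_mul' a b := by ext x; induction x using OnePoint.rec <;> simp [mul_assoc]

theorem pmulHom_injective : Function.Injective (pmulHom p) := fun a b h => by
  simpa [pmulHom, Units.ext_iff] using congr($h (1 : ZMod p))

end Maps

theorem apply_coe_eq_of_mul_ptrans_one {p : ℕ} [NeZero p] {g : Perm (OnePoint (ZMod p))}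
    {b d : ZMod p} (hg : g * ptrans p 1 = ptrans p b * g) (hd : g (0 : ZMod p) = d) (z : ZMod p) :
    g z = ↑(b * z + d) := by
  suffices h : ∀ n : ℕ, g (n : ZMod p) = ↑(b * n + d) by simpa using h z.val
  intro n
  induction n with
  | zero => simpa using hd
  | succ n ih =>
    have := congr($hg (n : ZMod p))
    simp only [Perm.mul_apply, ptrans_coe, ih] at this
    rw [Nat.cast_succ, this]
    congr 1
    ring

theorem Nat.card_onePoint (X : Type*) [Finite X] : Nat.card (OnePoint X) = Nat.card X + 1 :=
  Finite.card_option

section Stabilizers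

variable {p : ℕ} {G : Subgroup (Perm (OnePoint (ZMod p)))}

variable (G) in
def stabilizerInfty : Subgroup (Perm (OnePoint (ZMod p))) :=
  G ⊓ stabilizer _ (∞ : OnePoint (ZMod p))

variable (G) in
def stabilizerZeroInfty : Subgroup (Perm (OnePoint (ZMod p))) :=
  stabilizerInfty G ⊓ stabilizer _ ((0 : ZMod p) : OnePoint (ZMod p))

theorem mem_stabilizerZeroInfty {g : Perm (OnePoint (ZMod p))} :
    g ∈ stabilizerZeroInfty G ↔ g ∈ G ∧ g ∞ = ∞ ∧ g (0 : ZMod p) = (0 : ZMod p) := and_assoc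

variable [Fact p.Prime]

theorem card_stabilizerInfty (htrans : ∀ x y : OnePoint (ZMod p), ∃ g ∈ G, g x = y) :
    Nat.card (stabilizerInfty G) * (p + 1) = Nat.card G := by
  have horbit : orbit G (∞ : OnePoint (ZMod p)) = Set.univ :=
    Set.eq_univ_of_forall fun y => by
      obtain ⟨g, hg, rfl⟩ := htrans ∞ y
      exact ⟨⟨g, hg⟩, rfl⟩
  rw [stabilizerInfty, ← G.card_inf_stabilizer_mul_ncard_orbit (∞ : OnePoint (ZMod p)), horbit,
    Set.ncard_univ, Nat.card_onePoint, Nat.card_zmod]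

theorem card_stabilizerZeroInfty (htransl : ∀ a : ZMod p, ptrans p a ∈ G) :
    Nat.card (stabilizerZeroInfty G) * p = Nat.card (stabilizerInfty G) := by
  have horbit : orbit (stabilizerInfty G) ((0 : ZMod p) : OnePoint (ZMod p)) =
      Set.range ((↑) : ZMod p → OnePoint (ZMod p)) := by
    refine subset_antisymm ?_ fun x ⟨z, hz⟩ => ⟨⟨ptrans p z, htransl z, rfl⟩, ?_⟩
    · rintro _ ⟨⟨g, -, hg⟩, rfl⟩
      refine ne_infty_iff_exists.mp fun h => coe_ne_infty (0 : ZMod p) ?_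
      exact g.injective (h.trans hg.symm)
    · show ptrans p z (0 : ZMod p) = x
      simp [← hz]
  rw [← (stabilizerInfty G).card_inf_stabilizer_mul_ncard_orbit ((0 : ZMod p) : OnePoint (ZMod p)),
    horbit, Set.ncard_range_of_injective coe_injective, Nat.card_zmod]
  rfl

theorem two_mul_card_stabilizerZeroInfty (htrans : ∀ x y : OnePoint (ZMod p), ∃ g ∈ G, g x = y)
    (hcard : Nat.card G = (p ^ 3 - p) / 2) (htransl : ∀ a : ZMod p, ptrans p a ∈ G) :
    2 * Nat.card (stabilizerZeroInfty G) = p - 1 := by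
  rw [← card_stabilizerInfty htrans, ← card_stabilizerZeroInfty htransl] at hcard
  obtain ⟨m, rfl⟩ : ∃ m, p = m + 1 :=
    ⟨p - 1, (Nat.succ_pred_eq_of_pos (Fact.out : p.Prime).pos).symm⟩
  have hcube : (m + 1) ^ 3 - (m + 1) = m * (m + 1) * (m + 2) := by
    rw [Nat.sub_eq_iff_eq_add (Nat.le_self_pow (by norm_num) _)]
    ring
  have heven : 2 ∣ m * (m + 1) * (m + 2) := ((Nat.even_mul_succ_self m).mul_right _).two_dvd
  rw [hcube] at hcard
  refine Nat.eq_of_mul_eq_mul_right (show 0 < (m + 1) * (m + 2) by positivity) ?_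
  calc 2 * Nat.card (stabilizerZeroInfty G) * ((m + 1) * (m + 2))
      = 2 * (m * (m + 1) * (m + 2) / 2) := by rw [← hcard]; ring
    _ = m * ((m + 1) * (m + 2)) := by rw [Nat.mul_div_cancel' heven]; ring

theorem conj_ptrans_one_mem_range_ptransHom (htransl : ∀ a : ZMod p, ptrans p a ∈ G)
    (hL : Nat.card (stabilizerZeroInfty G) < p)
    {g : Perm (OnePoint (ZMod p))} (hg : g ∈ stabilizerInfty G) :
    g * ptrans p 1 * g⁻¹ ∈ (ptransHom p).range := by
  have hle : (ptransHom p).range ≤ stabilizerInfty G := by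
    rintro _ ⟨a, rfl⟩
    exact ⟨htransl _, rfl⟩
  set T := (ptransHom p).range.subgroupOf (stabilizerInfty G)
  have hcardT : Nat.card T = p := by
    rw [Nat.card_congr (Subgroup.subgroupOfEquivOfLe hle).toEquiv,
      ← Nat.card_congr (MonoidHom.ofInjective ptransHom_injective).toEquiv]
    simp
  have hindex : T.index = Nat.card (stabilizerZeroInfty G) := by
    have := T.card_mul_index
    rw [hcardT, ← card_stabilizerZeroInfty htransl, mul_comm] at this
    exact Nat.eq_of_mul_eq_mul_right (Fact.out : p.Prime).pos this
  have hnormal : T.Normal := by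
    refine (IsPGroup.of_card (n := 1) (by rw [hcardT, pow_one])).normal_of_index_lt ?_
    rwa [hindex]
  exact (Subgroup.normal_subgroupOf_iff hle).mp hnormal _ _ ⟨Multiplicative.ofAdd 1, rfl⟩ hg

theorem exists_affine_of_mem_stabilizerInfty
    (htransl : ∀ a : ZMod p, ptrans p a ∈ G)
    (hL : Nat.card (stabilizerZeroInfty G) < p)
    {g : Perm (OnePoint (ZMod p))} (hg : g ∈ stabilizerInfty G) :
    ∃ b d : ZMod p, b ≠ 0 ∧ ∀ z : ZMod p, g z = ↑(b * z + d) := by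
  obtain ⟨a, ha⟩ := conj_ptrans_one_mem_range_ptransHom htransl hL hg
  have hcomm : g * ptrans p 1 = ptrans p a.toAdd * g := mul_inv_eq_iff_eq_mul.mp ha.symm
  obtain ⟨d, hd⟩ : ∃ d : ZMod p, ↑d = g (0 : ZMod p) :=
    ne_infty_iff_exists.mp fun h => coe_ne_infty (0 : ZMod p) (g.injective (h.trans hg.2.symm))
  have haff := apply_coe_eq_of_mul_ptrans_one hcomm hd.symm
  refine ⟨a.toAdd, d, fun hb => ?_, haff⟩
  have h10 : g (1 : ZMod p) = g (0 : ZMod p) := by rw [haff, haff, hb]; simp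
  exact one_ne_zero (coe_injective (g.injective h10))

theorem stabilizerZeroInfty_le_map_comap_pmulHom
    (htransl : ∀ a : ZMod p, ptrans p a ∈ G)
    (hL : Nat.card (stabilizerZeroInfty G) < p) :
    stabilizerZeroInfty G ≤ (G.comap (pmulHom p)).map (pmulHom p) := by
  intro g hg
  obtain ⟨hgG, hginf, hg0⟩ := mem_stabilizerZeroInfty.mp hg
  obtain ⟨b, d, hb, haff⟩ := exists_affine_of_mem_stabilizerInfty htransl hL ⟨hgG, hginf⟩
  have hd : d = 0 := by simpa [hg0] using (haff 0).symm
  have hu : pmulHom p (Units.mk0 b hb) = g := by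
    ext x
    induction x using OnePoint.rec <;> simp [pmulHom, haff, hd, hginf]
  exact ⟨Units.mk0 b hb, by simpa [hu] using hgG, hu⟩

theorem pmulHom_sq_mem (htransl : ∀ a : ZMod p, ptrans p a ∈ G)
    (hL : 2 * Nat.card (stabilizerZeroInfty G) = p - 1)
    (u : (ZMod p)ˣ) : pmulHom p (u ^ 2) ∈ G := by
  set U := G.comap (pmulHom p)
  have hLlt : Nat.card (stabilizerZeroInfty G) < p := by
    have := (Fact.out : p.Prime).pos
    omega
  have hle : Nat.card (stabilizerZeroInfty G) ≤ Nat.card U :=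
    (Subgroup.card_le_of_le (stabilizerZeroInfty_le_map_comap_pmulHom htransl hLlt)).trans
      (Subgroup.card_map_of_injective pmulHom_injective).le
  have hunits : Nat.card (ZMod p)ˣ = p - 1 := by
    rw [Nat.card_eq_fintype_card, ZMod.card_units]
  exact U.sq_mem_of_card_le_two_mul (by omega) u

theorem eq_one_of_fixes_infty_zero_one (htransl : ∀ a : ZMod p, ptrans p a ∈ G)
    (hL : Nat.card (stabilizerZeroInfty G) < p)
    {g : Perm (OnePoint (ZMod p))} (hg : g ∈ G) (hginf : g ∞ = ∞)
    (hg0 : g (0 : ZMod p) = (0 : ZMod p)) (hg1 : g (1 : ZMod p) = (1 : ZMod p)) : g = 1 := by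
  obtain ⟨b, d, -, haff⟩ := exists_affine_of_mem_stabilizerInfty htransl hL ⟨hg, hginf⟩
  have hd : d = 0 := by simpa [hg0] using (haff 0).symm
  have hb : b = 1 := by simpa [hg1, hd] using (haff 1).symm
  ext x
  induction x using OnePoint.rec <;> simp [haff, hb, hd, hginf]

theorem pmul_mem_of_isSquare (htransl : ∀ a : ZMod p, ptrans p a ∈ G)
    (hL : 2 * Nat.card (stabilizerZeroInfty G) = p - 1)
    {a : ZMod p} (hsq : IsSquare a) (ha : a ≠ 0) : pmul p a ha ∈ G := by
  obtain ⟨s, rfl⟩ := hsq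
  have hs : s ≠ 0 := left_ne_zero_of_mul ha
  simpa [pmulHom, sq] using pmulHom_sq_mem htransl hL (Units.mk0 s hs)

end Stabilizers

theorem alpha_has_order_three_general
    (p : ℕ) [Fact p.Prime] (hp3 : p % 4 = 3)
    (G : Subgroup (Equiv.Perm (OnePoint (ZMod p))))
    (htrans : ∀ x y : OnePoint (ZMod p), ∃ g ∈ G, g x = y)
    (hcard : Nat.card G = (p ^ 3 - p) / 2)
    (htransl : ∀ a : ZMod p, ptrans p a ∈ G)
    (lam : Equiv.Perm (OnePoint (ZMod p))) (hlamG : lam ∈ G)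
    (hlam0 : lam (OnePoint.some (0 : ZMod p)) = OnePoint.infty)
    (hlaminf : lam OnePoint.infty = OnePoint.some (0 : ZMod p))
    (hlam2 : orderOf lam = 2)
    (n : ℕ) (c : ZMod p) (hcN : c ∈ Nset p)
    (hR : ∀ z ∈ Rset p, lam (OnePoint.some z) = OnePoint.some (c * z ^ n))
    (hcinv : (-c⁻¹ : ZMod p) ≠ 0)
    (α : Equiv.Perm (OnePoint (ZMod p)))
    (hα : α = ptrans p 1 * pmul p (-c⁻¹) hcinv * lam) :
    α ∈ G ∧ orderOf α = 3 ∧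
      (∀ z : ZMod p, α⁻¹ (OnePoint.some z) = lam (OnePoint.some (c * (1 - z)))) ∧
      α⁻¹ OnePoint.infty = lam OnePoint.infty := by
  obtain ⟨hc0, hcsq⟩ := hcN
  have hL := two_mul_card_stabilizerZeroInfty htrans hcard htransl
  have hLlt : Nat.card (stabilizerZeroInfty G) < p := by
    have := (Fact.out : p.Prime).pos
    omega
  have hmulG : pmul p (-c⁻¹) hcinv ∈ G :=
    pmul_mem_of_isSquare htransl hL (ZMod.isSquare_neg_inv_of_not_isSquare hp3 hcsq) hcinv
  have hαG : α ∈ G := hα ▸ G.mul_mem (G.mul_mem (htransl 1) hmulG) hlamG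
  have hinf : α ∞ = (1 : ZMod p) := by simp [hα, hlaminf]
  have h1 : α (1 : ZMod p) = (0 : ZMod p) := by
    simp [hα, hR 1 ⟨one_ne_zero, IsSquare.one⟩, hc0]
  have h0 : α (0 : ZMod p) = ∞ := by simp [hα, hlam0]
  have hα3 : α ^ 3 = 1 := by
    refine eq_one_of_fixes_infty_zero_one htransl hLlt (G.pow_mem hαG 3) ?_ ?_ ?_ <;>
      simp [pow_succ, hinf, h1, h0]
  refine ⟨hαG, orderOf_eq_prime hα3 fun h => by simp [h] at h0, ?_⟩
  have hlam_sq : ∀ x, lam (lam x) = x := fun x => by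
    rw [← Perm.mul_apply, ← sq, ← hlam2, pow_orderOf_eq_one, Perm.one_apply]
  refine ⟨fun z => ?_, ?_⟩ <;> rw [Perm.inv_eq_iff_eq] <;> simp [hα, hlam_sq]
  rw [← mul_assoc, inv_mul_cancel₀ hc0]
  ring

theorem alpha_has_order_three
    (p : ℕ) [Fact p.Prime] (hp2 : p ≠ 2) (hp3 : p % 4 = 3)
    (G : Subgroup (Equiv.Perm (OnePoint (ZMod p))))
    (htrans : ∀ x y : OnePoint (ZMod p), ∃ g ∈ G, g x = y)
    (hcard : Nat.card G = (p ^ 3 - p) / 2)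
    (htransl : ∀ a : ZMod p, ptrans p a ∈ G)
    (lam : Equiv.Perm (OnePoint (ZMod p))) (hlamG : lam ∈ G)
    (hlam0 : lam (OnePoint.some (0 : ZMod p)) = OnePoint.infty)
    (hlaminf : lam OnePoint.infty = OnePoint.some (0 : ZMod p))
    (hlam2 : orderOf lam = 2)
    (n : ℕ) (hn : Odd n) (c : ZMod p) (hcN : c ∈ Nset p)
    (hR : ∀ z ∈ Rset p, lam (OnePoint.some z) = OnePoint.some (c * z ^ n))
    (hN : ∀ z ∈ Nset p, lam (OnePoint.some z) = OnePoint.some (c⁻¹ * z ^ n))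
    (hcn : c ^ n = c)
    (hcinv : (-c⁻¹ : ZMod p) ≠ 0)
    (α : Equiv.Perm (OnePoint (ZMod p)))
    (hα : α = ptrans p 1 * pmul p (-c⁻¹) hcinv * lam) :
    α ∈ G ∧ orderOf α = 3 ∧
      (∀ z : ZMod p, α⁻¹ (OnePoint.some z) = lam (OnePoint.some (c * (1 - z)))) ∧
      α⁻¹ OnePoint.infty = lam OnePoint.infty :=
  alpha_has_order_three_general p hp3 G htrans hcard htransl lam hlamG hlam0 hlaminf hlam2 n c hcN
    hR hcinv α hα
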